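/- Let G = (ℤ/2ℤ)^n of size N = 2^n, let ε ∈ (0, 1/2) and A ⊆ G. Then there is a subgroup H ≤ G of index at most W(ε^{−3}) which is ε-regular for A, where W(t) denotes a tower of twos of height ⌈t⌉. -/

import Mathlib

/-! Energy increment. The energy of `A` relative to `H` is the mean square of the density of `A`
on the cosets of `H`, a number in `[0, 1]`. If `H` is not `ε`-regular, choose on every coset a
nonzero character of `H` with a large coefficient and let `H'` be the intersection of their kernels;
the index grows from `t` to at most `2ᵗ t`. On each coset of `H`, Bessel's inequality for the
orthogonal functions `1` and the character shows that the energy relative to `H'` exceeds the energy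
relative to `H` by more than `ε³`. So after fewer than `⌈ε⁻³⌉` refinements an `ε`-regular subgroup
is reached, and `2t ≤ m ⇒ 2 · 2ᵗ t ≤ 2ᵐ` keeps its index below a tower of height `⌈ε⁻³⌉`. -/

/-- Fourier coefficient on a subgroup `H ≤ (ℤ/2ℤ)ⁿ` of `A_H^{+g}` at `η ∈ H*`. -/
noncomputable def fcoef {n : ℕ} (A : Set (Fin n → ZMod 2))
    (H : AddSubgroup (Fin n → ZMod 2)) (g : Fin n → ZMod 2) (η : H →+ ZMod 2) : ℝ :=
  ∑ᶠ x : H, Set.indicator A (fun _ => (1 : ℝ)) ((x : Fin n → ZMod 2) + g) *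
    (-1 : ℝ) ^ (η x).val

/-- `g` is an `ε`-regular value for `A` with respect to `H`. -/
def IsRegularValue {n : ℕ} (ε : ℝ) (A : Set (Fin n → ZMod 2))
    (H : AddSubgroup (Fin n → ZMod 2)) (g : Fin n → ZMod 2) : Prop :=
  ∀ η : H →+ ZMod 2, η ≠ 0 → |fcoef A H g η| ≤ ε * Nat.card H

/-- `tower h` is a tower of twos of height `h`. -/
def tower : ℕ → ℕ
  | 0 => 1
  | h + 1 => 2 ^ tower h

open scoped Classical

section SignCharacter

variable {H : Type*} [AddGroup H]

noncomputable def signChar (η : H →+ ZMod 2) : AddChar H ℝ :=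
  (AddChar.zmodChar 2 (neg_one_sq : (-1 : ℝ) ^ 2 = 1)).compAddMonoidHom η

lemma signChar_apply (η : H →+ ZMod 2) (x : H) : signChar η x = (-1) ^ (η x).val := rfl

lemma abs_signChar (η : H →+ ZMod 2) (x : H) : |signChar η x| = 1 := by
  rw [signChar_apply, abs_pow, abs_neg, abs_one, one_pow]

lemma signChar_sq (η : H →+ ZMod 2) (x : H) : signChar η x ^ 2 = 1 := by
  rw [← sq_abs, abs_signChar, one_pow]

lemma signChar_add_of_eq_zero (η : H →+ ZMod 2) (x : H) {c : H} (hc : η c = 0) :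
    signChar η (x + c) = signChar η x := by
  rw [AddChar.map_add_eq_mul, signChar_apply η c, hc, ZMod.val_zero, pow_zero, mul_one]

lemma sum_signChar_eq_zero [Fintype H] {η : H →+ ZMod 2} (hη : η ≠ 0) :
    ∑ x, signChar η x = 0 := by
  refine AddChar.sum_eq_zero_of_ne_one fun h ↦ hη ?_
  ext x
  have hx : (-1 : ℝ) ^ (η x).val = 1 := by rw [← signChar_apply, h, AddChar.one_apply]
  rcases (show ∀ a : ZMod 2, a = 0 ∨ a = 1 by decide) (η x) with h0 | h1
  · exact h0
  · rw [h1, show ZMod.val (1 : ZMod 2) = 1 from rfl] at hx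
    norm_num at hx

end SignCharacter

lemma sq_add_sq_le_card_mul_sum_sq {ι : Type*} [Fintype ι] [Nonempty ι] (a s : ι → ℝ)
    (hs : ∀ i, s i ^ 2 = 1) (hs₀ : ∑ i, s i = 0) :
    (∑ i, a i) ^ 2 + (∑ i, a i * s i) ^ 2 ≤ (Fintype.card ι : ℝ) * ∑ i, a i ^ 2 := by
  set c : ℝ := (Fintype.card ι : ℝ)
  set m := ∑ i, a i
  set d := ∑ i, a i * s i
  -- `c • a` minus its projections onto the orthogonal vectors `1` and `s`
  have hexpand : ∑ i, (c * a i - m - d * s i) ^ 2 = c * (c * ∑ i, a i ^ 2 - m ^ 2 - d ^ 2) := by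
    have hterm : ∀ i, (c * a i - m - d * s i) ^ 2 = c ^ 2 * a i ^ 2 - 2 * c * m * a i
        - 2 * c * d * (a i * s i) + m ^ 2 + 2 * m * d * s i + d ^ 2 := fun i ↦ by
      linear_combination d ^ 2 * hs i
    simp only [hterm, Finset.sum_add_distrib, Finset.sum_sub_distrib, ← Finset.mul_sum,
      Finset.sum_const, Finset.card_univ, nsmul_eq_mul, hs₀]
    ring
  have hc : 0 < c := by simp [c, Fintype.card_pos]
  have := nonneg_of_mul_nonneg_right (hexpand ▸ Finset.sum_nonneg fun i _ ↦ sq_nonneg _) hc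
  linarith

section CosetAverage

variable {G : Type*} [AddCommGroup G] [Fintype G]

noncomputable def cosetAverage (f : G → ℝ) (H : AddSubgroup G) (g : G) : ℝ :=
  (∑ x : H, f (x + g)) / Nat.card H

noncomputable def energy (f : G → ℝ) (H : AddSubgroup G) : ℝ :=
  (∑ g, cosetAverage f H g ^ 2) / Fintype.card G

lemma abs_cosetAverage_le_one {f : G → ℝ} (hf : ∀ x, |f x| ≤ 1) (H : AddSubgroup G) (g : G) :
    |cosetAverage f H g| ≤ 1 := by
  rw [cosetAverage, abs_div, Nat.abs_cast, div_le_one (Nat.cast_pos.mpr Nat.card_pos)]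
  calc |∑ x : H, f (x + g)| ≤ ∑ _x : H, (1 : ℝ) :=
        (Finset.abs_sum_le_sum_abs _ _).trans (Finset.sum_le_sum fun x _ ↦ hf _)
    _ = Nat.card H := by simp

lemma energy_nonneg (f : G → ℝ) (H : AddSubgroup G) : 0 ≤ energy f H := by
  unfold energy; positivity

lemma energy_le_one {f : G → ℝ} (hf : ∀ x, |f x| ≤ 1) (H : AddSubgroup G) : energy f H ≤ 1 := by
  rw [energy, div_le_one (by simp [Fintype.card_pos])]
  calc ∑ g, cosetAverage f H g ^ 2 ≤ ∑ _g : G, (1 : ℝ) := Finset.sum_le_sum fun g _ ↦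
        (sq_le_one_iff_abs_le_one _).mpr (abs_cosetAverage_le_one hf H g)
    _ = Fintype.card G := by simp

lemma sum_sum_add_eq_card_mul_sum (F : G → ℝ) (H : AddSubgroup G) :
    ∑ g, ∑ x : H, F (x + g) = Nat.card H * ∑ g, F g := by
  have htranslate : ∀ y : H, ∑ x, F (y + x) = ∑ x, F x := fun y ↦
    Equiv.sum_comp (Equiv.addLeft (y : G)) F
  rw [Finset.sum_comm]
  simp [htranslate, Nat.card_eq_fintype_card]

lemma sum_cosetAverage_mul_eq {H H' : AddSubgroup G} (hle : H' ≤ H) (f : G → ℝ) (ψ : H → ℝ)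
    (hψ : ∀ x (y : H'), ψ (x + AddSubgroup.inclusion hle y) = ψ x) (g : G) :
    ∑ x : H, cosetAverage f H' (x + g) * ψ x = ∑ x : H, f (x + g) * ψ x := by
  have hshift : ∀ y : H', ∑ x : H, f (y + (x + g)) * ψ x = ∑ x : H, f (x + g) * ψ x := by
    intro y
    rw [← Equiv.sum_comp (Equiv.addRight (AddSubgroup.inclusion hle y))
      (fun x : H ↦ f (x + g) * ψ x)]
    refine Finset.sum_congr rfl fun x _ ↦ ?_
    simp only [Equiv.coe_addRight, AddSubgroup.coe_add, AddSubgroup.coe_inclusion, hψ]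
    congr 2
    abel
  simp only [cosetAverage, div_mul_eq_mul_div, ← Finset.sum_div, Finset.sum_mul]
  rw [Finset.sum_comm]
  simp only [hshift, Finset.sum_const, Finset.card_univ, nsmul_eq_mul, Nat.card_eq_fintype_card]
  field_simp

lemma sum_cosetAverage_eq {H H' : AddSubgroup G} (hle : H' ≤ H) (f : G → ℝ) (g : G) :
    ∑ x : H, cosetAverage f H' (x + g) = Nat.card H * cosetAverage f H g := by
  have h := sum_cosetAverage_mul_eq hle f (fun _ ↦ 1) (fun _ _ ↦ rfl) g
  simp only [mul_one] at h
  rw [h, cosetAverage, mul_div_cancel₀ _ (Nat.cast_pos.mpr Nat.card_pos).ne']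

lemma card_mul_sq_cosetAverage_le {H H' : AddSubgroup G} (hle : H' ≤ H) (f : G → ℝ) (g : G) :
    Nat.card H * cosetAverage f H g ^ 2 ≤ ∑ x : H, cosetAverage f H' (x + g) ^ 2 := by
  have h := sq_sum_le_card_mul_sum_sq (s := Finset.univ)
    (f := fun x : H ↦ cosetAverage f H' (x + g))
  rw [sum_cosetAverage_eq hle, Finset.card_univ, ← Nat.card_eq_fintype_card] at h
  have hH : (0 : ℝ) < Nat.card H := Nat.cast_pos.mpr Nat.card_pos
  nlinarith

lemma card_mul_sq_cosetAverage_add_le {H H' : AddSubgroup G} (hle : H' ≤ H) (f : G → ℝ)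
    {η : H →+ ZMod 2} (hη : η ≠ 0) (hker : ∀ y : H', η (AddSubgroup.inclusion hle y) = 0)
    (g : G) :
    Nat.card H * cosetAverage f H g ^ 2 + (∑ x : H, f (x + g) * signChar η x) ^ 2 / Nat.card H
      ≤ ∑ x : H, cosetAverage f H' (x + g) ^ 2 := by
  have h := sq_add_sq_le_card_mul_sum_sq (fun x : H ↦ cosetAverage f H' (x + g))
    (signChar η) (signChar_sq η) (sum_signChar_eq_zero hη)
  rw [sum_cosetAverage_eq hle, sum_cosetAverage_mul_eq hle f _
    (fun x y ↦ signChar_add_of_eq_zero η x (hker y)), ← Nat.card_eq_fintype_card] at h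
  have hH : (0 : ℝ) < Nat.card H := Nat.cast_pos.mpr Nat.card_pos
  refine le_of_mul_le_mul_left ?_ hH
  calc (Nat.card H : ℝ) * (Nat.card H * cosetAverage f H g ^ 2
        + (∑ x : H, f (x + g) * signChar η x) ^ 2 / Nat.card H)
      = (Nat.card H * cosetAverage f H g) ^ 2 + (∑ x : H, f (x + g) * signChar η x) ^ 2 := by
        field_simp
    _ ≤ _ := h

lemma energy_add_le_energy {H H' : AddSubgroup G} (hle : H' ≤ H) (f : G → ℝ) (B : Finset G)
    {δ : ℝ} (hδ : 0 ≤ δ)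
    (hB : ∀ g ∈ B, ∃ η : H →+ ZMod 2, η ≠ 0 ∧ (∀ y : H', η (AddSubgroup.inclusion hle y) = 0) ∧
      δ * Nat.card H ≤ |∑ x : H, f (x + g) * signChar η x|) :
    energy f H + δ ^ 2 * B.card / Fintype.card G ≤ energy f H' := by
  have hH : (0 : ℝ) < Nat.card H := Nat.cast_pos.mpr Nat.card_pos
  have hcoset : ∀ g, Nat.card H * (cosetAverage f H g ^ 2 + if g ∈ B then δ ^ 2 else 0)
      ≤ ∑ x : H, cosetAverage f H' (x + g) ^ 2 := by
    intro g
    split_ifs with hg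
    · obtain ⟨η, hη, hker, hlarge⟩ := hB g hg
      have hsq : (δ * Nat.card H) ^ 2 ≤ (∑ x : H, f (x + g) * signChar η x) ^ 2 := by
        simpa only [sq_abs] using pow_le_pow_left₀ (mul_nonneg hδ hH.le) hlarge 2
      refine le_trans ?_ (card_mul_sq_cosetAverage_add_le hle f hη hker g)
      rw [mul_add, add_le_add_iff_left, le_div_iff₀ hH]
      linarith
    · simpa using card_mul_sq_cosetAverage_le hle f g
  have hsum := Finset.sum_le_sum fun g (_ : g ∈ Finset.univ) ↦ hcoset g
  rw [← Finset.mul_sum, Finset.sum_add_distrib, Finset.sum_ite_mem, Finset.univ_inter,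
    Finset.sum_const, nsmul_eq_mul, sum_sum_add_eq_card_mul_sum (fun v ↦ cosetAverage f H' v ^ 2),
    mul_le_mul_iff_right₀ hH] at hsum
  rw [energy, energy, ← add_div, div_le_div_iff_of_pos_right (by simp [Fintype.card_pos])]
  linarith

lemma abs_sum_add_mul_signChar {H : AddSubgroup G} (f : G → ℝ) (η : H →+ ZMod 2) (g : G) (c : H) :
    |∑ x : H, f (x + (g + c)) * signChar η x| = |∑ x : H, f (x + g) * signChar η x| := by
  have hshift : ∑ x : H, f (x + g) * signChar η x
      = signChar η c * ∑ x : H, f (x + (g + c)) * signChar η x := by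
    rw [← Equiv.sum_comp (Equiv.addRight c) (fun x : H ↦ f (x + g) * signChar η x),
      Finset.mul_sum]
    refine Finset.sum_congr rfl fun x _ ↦ ?_
    simp only [Equiv.coe_addRight, AddSubgroup.coe_add, AddChar.map_add_eq_mul]
    rw [add_right_comm, add_assoc]
    ring
  rw [hshift, abs_mul, abs_signChar, one_mul]

end CosetAverage

lemma index_map_subtype_ker_pi_le {G : Type*} [AddGroup G] {H : AddSubgroup G} {ι : Type*}
    [Fintype ι] (η : ι → H →+ ZMod 2) :
    ((AddMonoidHom.pi η).ker.map H.subtype).index ≤ 2 ^ Fintype.card ι * H.index := by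
  rw [AddSubgroup.index_map_subtype, AddSubgroup.index_ker]
  gcongr
  calc Nat.card (AddMonoidHom.pi η).range ≤ Nat.card (ι → ZMod 2) :=
        Nat.card_le_card_of_injective _ Subtype.val_injective
    _ = 2 ^ Fintype.card ι := by simp

lemma two_mul_two_pow_mul_le_two_pow {t m : ℕ} (h : 2 * t ≤ m) : 2 * (2 ^ t * t) ≤ 2 ^ m := by
  rcases Nat.eq_zero_or_pos t with rfl | ht
  · simp
  have h2t : 2 * t ≤ 2 ^ t := by
    have := Nat.lt_two_pow_self (n := t - 1)
    calc 2 * t ≤ 2 * 2 ^ (t - 1) := by omega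
      _ = 2 ^ t := by rw [← pow_succ', Nat.sub_add_cancel ht]
  calc 2 * (2 ^ t * t) = 2 ^ t * (2 * t) := by ring
    _ ≤ 2 ^ t * 2 ^ t := by gcongr
    _ = 2 ^ (2 * t) := by ring
    _ ≤ 2 ^ m := Nat.pow_le_pow_right two_pos h

section Regularity

variable {n : ℕ}

def IsRegularSubgroup (ε : ℝ) (A : Set (Fin n → ZMod 2)) (H : AddSubgroup (Fin n → ZMod 2)) :
    Prop :=
  (Nat.card {g // ¬ IsRegularValue ε A H g} : ℝ) ≤ ε * Fintype.card (Fin n → ZMod 2)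

lemma fcoef_eq_sum (A : Set (Fin n → ZMod 2)) (H : AddSubgroup (Fin n → ZMod 2))
    (g : Fin n → ZMod 2) (η : H →+ ZMod 2) :
    fcoef A H g η = ∑ x : H, A.indicator 1 (x + g) * signChar η x := by
  rw [fcoef, finsum_eq_sum_of_fintype]
  rfl

/-- Irregularity is a property of the coset `g + H`, so one witnessing character per coset
suffices; `H'` is the intersection of their kernels. -/
lemma exists_le_index_le_and_witnesses_vanish (ε : ℝ) (A : Set (Fin n → ZMod 2))
    (H : AddSubgroup (Fin n → ZMod 2)) :
    ∃ H' : AddSubgroup (Fin n → ZMod 2), ∃ hle : H' ≤ H, H'.index ≤ 2 ^ H.index * H.index ∧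
      ∀ g, ¬ IsRegularValue ε A H g → ∃ η : H →+ ZMod 2, η ≠ 0 ∧
        (∀ y : H', η (AddSubgroup.inclusion hle y) = 0) ∧ ε * Nat.card H ≤ |fcoef A H g η| := by
  have hwitness : ∀ q : (Fin n → ZMod 2) ⧸ H, ∃ η : H →+ ZMod 2,
      ¬ IsRegularValue ε A H q.out → η ≠ 0 ∧ ε * Nat.card H ≤ |fcoef A H q.out η| := by
    intro q
    by_cases hq : IsRegularValue ε A H q.out
    · exact ⟨0, fun h ↦ (h hq).elim⟩
    · simp only [IsRegularValue, not_forall, not_le] at hq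
      obtain ⟨η, hη, hlarge⟩ := hq
      exact ⟨η, fun _ ↦ ⟨hη, hlarge.le⟩⟩
  choose η hη using hwitness
  refine ⟨(AddMonoidHom.pi η).ker.map H.subtype, AddSubgroup.map_subtype_le _, ?_, ?_⟩
  · simpa [AddSubgroup.index_eq_card, Nat.card_eq_fintype_card] using
      index_map_subtype_ker_pi_le η
  intro g hg
  obtain ⟨c, hc⟩ := QuotientAddGroup.mk_out_eq_add H g
  have habs : ∀ η, |fcoef A H (QuotientAddGroup.mk g : (Fin n → ZMod 2) ⧸ H).out η|
      = |fcoef A H g η| := fun η ↦ by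
    rw [hc, fcoef_eq_sum, fcoef_eq_sum, abs_sum_add_mul_signChar]
  have hout : ¬ IsRegularValue ε A H (QuotientAddGroup.mk g : (Fin n → ZMod 2) ⧸ H).out := by
    simpa only [IsRegularValue, habs] using hg
  obtain ⟨hne, hlarge⟩ := hη _ hout
  refine ⟨_, hne, fun y ↦ ?_, habs _ ▸ hlarge⟩
  obtain ⟨z, hz, hzy⟩ := AddSubgroup.mem_map.mp y.2
  have : AddSubgroup.inclusion (AddSubgroup.map_subtype_le _) y = z := Subtype.ext hzy.symm
  rw [this]
  exact congrFun hz _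

lemma exists_index_le_energy_add_lt {ε : ℝ} (hε : 0 < ε) {A : Set (Fin n → ZMod 2)}
    {H : AddSubgroup (Fin n → ZMod 2)} (hA : ¬ IsRegularSubgroup ε A H) :
    ∃ H' : AddSubgroup (Fin n → ZMod 2), H'.index ≤ 2 ^ H.index * H.index ∧
      energy (A.indicator 1) H + ε ^ 3 < energy (A.indicator 1) H' := by
  obtain ⟨H', hle, hidx, hwitness⟩ := exists_le_index_le_and_witnesses_vanish ε A H
  refine ⟨H', hidx, ?_⟩
  set B := Finset.univ.filter (¬ IsRegularValue ε A H ·)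
  have hB : ε * Fintype.card (Fin n → ZMod 2) < B.card := by
    rwa [IsRegularSubgroup, not_le, Nat.card_eq_fintype_card, Fintype.card_subtype] at hA
  have hincr := energy_add_le_energy hle (A.indicator 1) B hε.le fun g hg ↦ by
    simpa only [fcoef_eq_sum] using hwitness g (Finset.mem_filter.mp hg).2
  have hN : (0 : ℝ) < Fintype.card (Fin n → ZMod 2) := by simp
  have : ε ^ 3 < ε ^ 2 * B.card / Fintype.card (Fin n → ZMod 2) := by
    rw [lt_div_iff₀ hN]
    nlinarith [pow_pos hε 2]
  linarith

lemma exists_two_mul_index_le_tower (ε : ℝ) (hε : 0 < ε) (A : Set (Fin n → ZMod 2)) (k : ℕ) :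
    ∃ H : AddSubgroup (Fin n → ZMod 2), 2 * H.index ≤ tower (k + 1) ∧
      (IsRegularSubgroup ε A H ∨ k * ε ^ 3 ≤ energy (A.indicator 1) H) := by
  induction k with
  | zero => exact ⟨⊤, by simp [tower], Or.inr (by simpa using energy_nonneg _ _)⟩
  | succ k ih =>
    obtain ⟨H, hidx, hH⟩ := ih
    by_cases hreg : IsRegularSubgroup ε A H
    · exact ⟨H, hidx.trans Nat.lt_two_pow_self.le, Or.inl hreg⟩
    obtain ⟨H', hidx', henergy⟩ := exists_index_le_energy_add_lt hε hreg
    refine ⟨H', ?_, Or.inr ?_⟩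
    · calc 2 * H'.index ≤ 2 * (2 ^ H.index * H.index) := Nat.mul_le_mul_left 2 hidx'
        _ ≤ tower (k + 2) := two_mul_two_pow_mul_le_two_pow hidx
    · have := hH.resolve_left hreg
      push_cast
      linarith

lemma isRegularSubgroup_of_energy_ge {ε : ℝ} (hε : 0 < ε) {A : Set (Fin n → ZMod 2)}
    {H : AddSubgroup (Fin n → ZMod 2)} {k : ℕ} (hk : 1 ≤ (k + 1 : ℝ) * ε ^ 3)
    (henergy : k * ε ^ 3 ≤ energy (A.indicator 1) H) : IsRegularSubgroup ε A H := by
  by_contra hreg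
  obtain ⟨H', -, hH'⟩ := exists_index_le_energy_add_lt hε hreg
  have := energy_le_one (f := A.indicator 1) (fun x ↦ by by_cases hx : x ∈ A <;> simp [hx]) H'
  linarith

end Regularity

theorem regularity_lemma_Z2_general {n : ℕ} (ε : ℝ) (hε0 : 0 < ε)
    (A : Set (Fin n → ZMod 2)) :
    ∃ H : AddSubgroup (Fin n → ZMod 2),
      H.index ≤ tower ⌈(ε ^ 3)⁻¹⌉₊ ∧
      (Nat.card {g : Fin n → ZMod 2 // ¬ IsRegularValue ε A H g} : ℝ) ≤
        ε * (Fintype.card (Fin n → ZMod 2) : ℝ) := by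
  obtain ⟨k, hk⟩ := Nat.exists_eq_add_one_of_ne_zero
    (Nat.ceil_pos.mpr (by positivity : (0 : ℝ) < (ε ^ 3)⁻¹)).ne'
  have hkε : 1 ≤ (k + 1 : ℝ) * ε ^ 3 := by
    have := Nat.le_ceil (ε ^ 3)⁻¹
    rwa [hk, Nat.cast_add_one, inv_le_iff_one_le_mul₀ (by positivity)] at this
  obtain ⟨H, hidx, hH⟩ := exists_two_mul_index_le_tower ε hε0 A k
  exact ⟨H, by rw [hk]; omega, hH.elim id (isRegularSubgroup_of_energy_ge hε0 hkε)⟩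

/-- Theorem 2.1, regularity lemma in `(ℤ/2ℤ)ⁿ`. Let
`G = (ℤ/2ℤ)ⁿ` of size `N = 2ⁿ`, `ε ∈ (0,1/2)` and `A ⊆ G`. Then there is a subgroup
`H ≤ G` of index at most `W(ε⁻³)` (a tower of twos of height `⌈ε⁻³⌉`) which is
`ε`-regular for `A`, i.e. the number of non-`ε`-regular values `g` is at most `εN`. -/
theorem regularity_lemma_Z2 {n : ℕ} (ε : ℝ) (hε0 : 0 < ε) (hε : ε < 1 / 2)
    (A : Set (Fin n → ZMod 2)) :
    ∃ H : AddSubgroup (Fin n → ZMod 2),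
      H.index ≤ tower ⌈(ε ^ 3)⁻¹⌉₊ ∧
      (Nat.card {g : Fin n → ZMod 2 // ¬ IsRegularValue ε A H g} : ℝ) ≤
        ε * (Fintype.card (Fin n → ZMod 2) : ℝ) :=
  regularity_lemma_Z2_general ε hε0 A
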